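/- arXiv:1906.09414 — 4 statements merged into one kernel-verified Lean document; each statement's English description precedes it below -/
import Mathlib

section
/- Let Γ be a finite connected regular simple graph of valency d ≥ 3, let G ≤ Aut(Γ) with Γ (G,2)-arc-transitive, and let {u,v} be an edge of Γ. Then the setwise edge-stabilizer G_{{u,v}} is solvable if and only if (G_v^{Γ(v)})_u = φ_v(G_{uv}) is solvable, and the vertex-stabilizer G_v is solvable if and only if the local group G_v^{Γ(v)} is solvable. -/
/-!
The forward implications hold because `φ_v(G_{uv})` and `G_v^{Γ(v)}` are images of
`G_{uv} ≤ G_{{u,v}}` and of `G_v`. For the converses, suppose `φ_v(G_{uv})` is solvable. Since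
valency at least 2 lets every arc extend to a 2-arc, `G` is arc-transitive, so every
`φ_w(G_{ww'})` is solvable. If a vertex set `S` contains `w` and `w'`, restriction to `Γ(w)` maps
the pointwise stabilizer `G_{(S)}` into `φ_w(G_{ww'})` with kernel `G_{(S ∪ Γ(w))}`. Starting from
`G_{(V)} = 1` and adding neighbourhoods of boundary vertices one at a time, connectivity shows
that `G_{(S)}` is solvable whenever `S` is nonempty and each vertex of `S` has a neighbour in `S`.
Taking `S = {u, v}`, `G_{uv}` is solvable; it has index at most 2 in `G_{{u,v}}` and contains
the kernel of `φ_v` on `G_v`.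
-/

open MulAction
open scoped Pointwise

namespace Stmt6

/-- The homomorphism `φ_v` from the vertex-stabilizer `G_v` to the permutation group of
the neighborhood `Γ(v)`, given by restricting the action. -/
def localHom {V G : Type*} [Group G] [MulAction G V] (Γ : SimpleGraph V)
    (hadj : ∀ (g : G) ⦃a b : V⦄, Γ.Adj a b → Γ.Adj (g • a) (g • b)) (v : V) :
    stabilizer G v →* Equiv.Perm (Γ.neighborSet v) where
  toFun g := Equiv.Perm.subtypePerm (MulAction.toPerm (g : G)) (fun w => by
    have hgv : (g : G) • v = v := mem_stabilizer_iff.mp g.2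
    simp only [SimpleGraph.mem_neighborSet, MulAction.toPerm_apply]
    constructor
    · intro hw
      have h1 := hadj ((g : G))⁻¹ hw
      rw [inv_smul_smul] at h1
      have h2 : ((g : G))⁻¹ • v = v := inv_smul_eq_iff.mpr hgv.symm
      rwa [h2] at h1
    · intro hw
      have h1 := hadj (g : G) hw
      rwa [hgv] at h1)
  map_one' := by
    ext w
    simp [Equiv.Perm.subtypePerm_apply]
  map_mul' g₁ g₂ := by
    ext w
    simp [Equiv.Perm.subtypePerm_apply, mul_smul]
    rfl

end Stmt6

theorem Subgroup.isSolvable_of_le {X : Type*} [Group X] {P Q : Subgroup X} (h : P ≤ Q)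
    [Group.IsSolvable Q] : Group.IsSolvable P :=
  Group.isSolvable_of_isSolvable_injective (Subgroup.inclusion_injective h)

theorem Subgroup.isSolvable_map {X Y : Type*} [Group X] [Group Y] (f : X →* Y) (P : Subgroup X)
    [Group.IsSolvable P] : Group.IsSolvable (P.map f) :=
  Group.isSolvable_of_surjective (f.subgroupMap_surjective P)

theorem Equiv.Perm.isSolvable_of_card_le_two {α : Type*} [Finite α] (h : Nat.card α ≤ 2) :
    Group.IsSolvable (Equiv.Perm α) :=
  letI := (Equiv.Perm.isCyclic_of_card_le_two h).commGroup
  inferInstance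

theorem MulAction.isSolvable_stabilizer_of_card_le_two {G V : Type*} [Group G] [MulAction G V]
    {s : Set V} [Finite s] (hs : Nat.card s ≤ 2) [Group.IsSolvable (fixingSubgroup G s)] :
    Group.IsSolvable (stabilizer G s) := by
  have := Equiv.Perm.isSolvable_of_card_le_two hs
  refine Group.isSolvable_of_ker_le_range
    (Subgroup.inclusion (fixingSubgroup_le_stabilizer G s)) (toPermHom (stabilizer G s) s) ?_
  intro a ha
  refine ⟨⟨a, (mem_fixingSubgroup_iff G).mpr fun x hx => ?_⟩, rfl⟩
  exact congrArg Subtype.val (Equiv.ext_iff.mp (MonoidHom.mem_ker.mp ha) ⟨x, hx⟩)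

theorem SimpleGraph.Connected.exists_adj_of_ne_univ {V : Type*} {Γ : SimpleGraph V}
    (hconn : Γ.Connected) {S : Set V} (hS : S.Nonempty) (hSu : S ≠ Set.univ) :
    ∃ w ∈ S, ∃ x ∉ S, Γ.Adj w x := by
  obtain ⟨v, hv⟩ := hS
  obtain ⟨x, hx⟩ := (Set.ne_univ_iff_exists_notMem S).mp hSu
  obtain ⟨d, -, hd, hd'⟩ := (hconn v x).some.exists_boundary_dart S hv hx
  exact ⟨d.fst, hd, d.snd, hd', d.adj⟩

namespace Stmt6

section LocalAction

variable {V G : Type*} [Group G] [MulAction G V] (Γ : SimpleGraph V)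
  (hadj : ∀ (g : G) ⦃a b : V⦄, Γ.Adj a b → Γ.Adj (g • a) (g • b))

/-- `(G_v^{Γ(v)})_u = φ_v(G_{uv})`. -/
def localStabilizer (v u : V) : Subgroup (Equiv.Perm (Γ.neighborSet v)) :=
  ((stabilizer G u ⊓ stabilizer G v).subgroupOf (stabilizer G v)).map (localHom Γ hadj v)

@[simp]
theorem localHom_apply_coe {v : V} (g : stabilizer G v) (x : Γ.neighborSet v) :
    (localHom Γ hadj v g x : V) = (g : G) • (x : V) :=
  rfl

theorem mem_ker_localHom_iff {v : V} {g : stabilizer G v} :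
    g ∈ (localHom Γ hadj v).ker ↔ ∀ x ∈ Γ.neighborSet v, (g : G) • x = x := by
  simp only [MonoidHom.mem_ker, Equiv.ext_iff, Subtype.ext_iff, localHom_apply_coe,
    Equiv.Perm.coe_one, id_eq, Subtype.forall]

include hadj in
theorem adj_smul_iff (g : G) {a b : V} : Γ.Adj (g • a) (g • b) ↔ Γ.Adj a b :=
  ⟨fun h => by simpa using hadj g⁻¹ h, fun h => hadj g h⟩

theorem isSolvable_localStabilizer_smul (g : G) {v u : V}
    [Group.IsSolvable (localStabilizer Γ hadj v u)] :
    Group.IsSolvable (localStabilizer Γ hadj (g • v) (g • u)) := by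
  let e : Γ.neighborSet v ≃ Γ.neighborSet (g • v) :=
    (toPerm g).subtypeEquiv fun x => (adj_smul_iff Γ hadj g).symm
  have := Subgroup.isSolvable_map e.permCongrHom.toMonoidHom (localStabilizer Γ hadj v u)
  refine Subgroup.isSolvable_of_le
    (Q := (localStabilizer Γ hadj v u).map e.permCongrHom.toMonoidHom) ?_
  rintro _ ⟨a, ha, rfl⟩
  rw [SetLike.mem_coe, Subgroup.mem_subgroupOf, Subgroup.mem_inf, mem_stabilizer_iff,
    mem_stabilizer_iff] at ha
  have hb : g⁻¹ * (a : G) * g ∈ stabilizer G u ⊓ stabilizer G v :=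
    ⟨by simp [mem_stabilizer_iff, mul_smul, ha.1], by simp [mem_stabilizer_iff, mul_smul, ha.2]⟩
  refine ⟨localHom Γ hadj v ⟨_, hb.2⟩, ⟨⟨_, hb.2⟩, hb, rfl⟩, ?_⟩
  ext y
  show g • (g⁻¹ * (a : G) * g) • g⁻¹ • (y : V) = (a : G) • (y : V)
  simp [mul_smul]

theorem isSolvable_localStabilizer_of_isSolvable_stabilizer_pair {u v : V}
    [Group.IsSolvable (stabilizer G ({u, v} : Set V))] :
    Group.IsSolvable (localStabilizer Γ hadj v u) := by
  have hinf : stabilizer G u ⊓ stabilizer G v ≤ stabilizer G ({u, v} : Set V) := by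
    rintro a ⟨hau, hav⟩
    rw [mem_stabilizer_iff, Set.smul_set_insert, Set.smul_set_singleton, hau, hav]
  have := Subgroup.isSolvable_of_le hinf
  have hle : stabilizer G u ⊓ stabilizer G v ≤ stabilizer G v := inf_le_right
  have := Group.isSolvable_of_isSolvable_injective
    (f := (Subgroup.subgroupOfEquivOfLe hle).toMonoidHom) (MulEquiv.injective _)
  exact Subgroup.isSolvable_map _ _

end LocalAction

section Kernels

variable {V G : Type*} [Group G] [MulAction G V] (Γ : SimpleGraph V)
  (hadj : ∀ (g : G) ⦃a b : V⦄, Γ.Adj a b → Γ.Adj (g • a) (g • b))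

theorem isSolvable_fixingSubgroup_of_union_neighborSet {S : Set V} {w w' : V} (hw : w ∈ S)
    (hw' : w' ∈ S) [Group.IsSolvable (fixingSubgroup G (S ∪ Γ.neighborSet w))]
    [Group.IsSolvable (localStabilizer Γ hadj w w')] :
    Group.IsSolvable (fixingSubgroup G S) := by
  have hfix : ∀ a ∈ fixingSubgroup G S, ∀ x ∈ S, a • x = x := fun a ha =>
    (mem_fixingSubgroup_iff G).mp ha
  have hle : fixingSubgroup G S ≤ stabilizer G w := fun a ha => hfix a ha w hw
  let ψ := (localHom Γ hadj w).comp (Subgroup.inclusion hle)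
  have hrange : ψ.range ≤ localStabilizer Γ hadj w w' := by
    rintro _ ⟨a, rfl⟩
    exact ⟨Subgroup.inclusion hle a, ⟨hfix a a.2 w' hw', hfix a a.2 w hw⟩, rfl⟩
  have := Subgroup.isSolvable_of_le hrange
  have hsub : S ⊆ S ∪ Γ.neighborSet w := Set.subset_union_left
  refine Group.isSolvable_of_ker_le_range
    (Subgroup.inclusion (fixingSubgroup_antitone G V hsub)) ψ.rangeRestrict ?_
  intro a ha
  rw [MonoidHom.ker_rangeRestrict, MonoidHom.mem_ker] at ha
  have hker := (mem_ker_localHom_iff Γ hadj).mp ha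
  refine ⟨⟨a, (mem_fixingSubgroup_iff G).mpr ?_⟩, rfl⟩
  rintro x (hx | hx)
  exacts [hfix a a.2 x hx, hker x hx]

theorem isSolvable_fixingSubgroup [Finite V] (hconn : Γ.Connected)
    (hfaith : ∀ g : G, (∀ x : V, g • x = x) → g = 1)
    (hloc : ∀ w w', Γ.Adj w w' → Group.IsSolvable (localStabilizer Γ hadj w w'))
    {S : Set V} (hS : S.Nonempty) (hnb : ∀ w ∈ S, ∃ w' ∈ S, Γ.Adj w w') :
    Group.IsSolvable (fixingSubgroup G S) := by
  induction hn : Sᶜ.ncard using Nat.strong_induction_on generalizing S with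
  | _ n ih =>
  by_cases hSu : S = Set.univ
  · subst hSu
    have : Subsingleton (fixingSubgroup G (Set.univ : Set V)) :=
      ⟨fun a b => Subtype.ext <| by
        rw [hfaith a fun x => a.2 ⟨x, trivial⟩, hfaith b fun x => b.2 ⟨x, trivial⟩]⟩
    infer_instance
  obtain ⟨w, hw, x, hx, hwx⟩ := hconn.exists_adj_of_ne_univ hS hSu
  obtain ⟨w', hw', hww'⟩ := hnb w hw
  have := hloc w w' hww'
  have : Group.IsSolvable (fixingSubgroup G (S ∪ Γ.neighborSet w)) := by
    refine ih _ ?_ (hS.mono Set.subset_union_left) ?_ rfl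
    · rw [← hn]
      refine Set.ncard_lt_ncard ⟨Set.compl_subset_compl.mpr Set.subset_union_left, ?_⟩
      exact fun h => h hx (Or.inr hwx)
    · rintro y (hy | hy)
      · obtain ⟨y', hy', hyy'⟩ := hnb y hy
        exact ⟨y', Or.inl hy', hyy'⟩
      · exact ⟨w, Or.inl hw, hy.symm⟩
  exact isSolvable_fixingSubgroup_of_union_neighborSet Γ hadj hw hw'

theorem isSolvable_stabilizer_of_isSolvable_fixingSubgroup_pair {u v : V} (huv : Γ.Adj v u)
    [Group.IsSolvable (fixingSubgroup G ({u, v} : Set V))]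
    [Group.IsSolvable ((⊤ : Subgroup (stabilizer G v)).map (localHom Γ hadj v))] :
    Group.IsSolvable (stabilizer G v) := by
  have hle : fixingSubgroup G ({u, v} : Set V) ≤ stabilizer G v := fun a ha =>
    (mem_fixingSubgroup_iff G).mp ha v (by simp)
  have : Group.IsSolvable (localHom Γ hadj v).range := by
    rwa [MonoidHom.range_eq_map]
  refine Group.isSolvable_of_ker_le_range (Subgroup.inclusion hle)
    (localHom Γ hadj v).rangeRestrict ?_
  intro a ha
  rw [MonoidHom.ker_rangeRestrict, mem_ker_localHom_iff] at ha
  refine ⟨⟨a, (mem_fixingSubgroup_iff G).mpr ?_⟩, rfl⟩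
  rintro x (rfl | rfl)
  exacts [ha x huv, a.2]

end Kernels

section ArcTransitivity

def IsTwoArcTransitive {V : Type*} (G : Type*) [Group G] [MulAction G V] (Γ : SimpleGraph V) :
    Prop :=
  ∀ ⦃v0 v1 v2 w0 w1 w2 : V⦄, Γ.Adj v0 v1 → Γ.Adj v1 v2 → v0 ≠ v2 →
    Γ.Adj w0 w1 → Γ.Adj w1 w2 → w0 ≠ w2 → ∃ g : G, g • v0 = w0 ∧ g • v1 = w1 ∧ g • v2 = w2

variable {V G : Type*} [Group G] [MulAction G V] {Γ : SimpleGraph V}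

theorem IsTwoArcTransitive.exists_smul_eq (h2arc : IsTwoArcTransitive G Γ)
    (hdeg : ∀ w, 1 < (Γ.neighborSet w).ncard) {v u w w' : V} (hvu : Γ.Adj v u)
    (hww' : Γ.Adj w w') : ∃ g : G, g • v = w ∧ g • u = w' := by
  obtain ⟨x, hx, hxu⟩ := Set.exists_ne_of_one_lt_ncard (hdeg v) u
  obtain ⟨y, hy, hyw'⟩ := Set.exists_ne_of_one_lt_ncard (hdeg w) w'
  obtain ⟨g, -, hgv, hgu⟩ := h2arc (Γ.adj_symm hx) hvu hxu (Γ.adj_symm hy) hww' hyw'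
  exact ⟨g, hgv, hgu⟩

theorem IsTwoArcTransitive.isSolvable_localStabilizer
    (hadj : ∀ (g : G) ⦃a b : V⦄, Γ.Adj a b → Γ.Adj (g • a) (g • b))
    (h2arc : IsTwoArcTransitive G Γ) (hdeg : ∀ w, 1 < (Γ.neighborSet w).ncard) {v u w w' : V}
    (hvu : Γ.Adj v u) [Group.IsSolvable (localStabilizer Γ hadj v u)] (hww' : Γ.Adj w w') :
    Group.IsSolvable (localStabilizer Γ hadj w w') := by
  obtain ⟨g, rfl, rfl⟩ := h2arc.exists_smul_eq hdeg hvu hww'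
  exact isSolvable_localStabilizer_smul Γ hadj g

end ArcTransitivity

/-- Let `Γ` be a finite connected regular graph of valency `d ≥ 3`,
`G ≤ Aut Γ` with `Γ` `(G,2)`-arc-transitive, and `{u,v}` an edge. Then the setwise
edge-stabilizer `G_{{u,v}}` is solvable iff `(G_v^{Γ(v)})_u = φ_v(G_{uv})` is solvable,
and `G_v` is solvable iff the local group `G_v^{Γ(v)}` is solvable. -/
theorem stmt_6 {V G : Type*} [Fintype V] [Group G] [MulAction G V]
    (Γ : SimpleGraph V) (d : ℕ) (hd : 3 ≤ d)
    (hreg : ∀ w : V, (Γ.neighborSet w).ncard = d)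
    (hconn : Γ.Connected)
    (hadj : ∀ (g : G) ⦃a b : V⦄, Γ.Adj a b → Γ.Adj (g • a) (g • b))
    (hfaith : ∀ g : G, (∀ x : V, g • x = x) → g = 1)
    (h2arc : ∀ ⦃v0 v1 v2 w0 w1 w2 : V⦄, Γ.Adj v0 v1 → Γ.Adj v1 v2 → v0 ≠ v2 →
      Γ.Adj w0 w1 → Γ.Adj w1 w2 → w0 ≠ w2 →
        ∃ g : G, g • v0 = w0 ∧ g • v1 = w1 ∧ g • v2 = w2)
    {u v : V} (huv : Γ.Adj u v) :
    (IsSolvable (stabilizer G ({u, v} : Set V)) ↔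
      IsSolvable (Subgroup.map (localHom Γ hadj v)
        ((stabilizer G u ⊓ stabilizer G v).subgroupOf (stabilizer G v)))) ∧
    (IsSolvable (stabilizer G v) ↔
      IsSolvable (Subgroup.map (localHom Γ hadj v) (⊤ : Subgroup (stabilizer G v)))) := by
  have hdeg : ∀ w, 1 < (Γ.neighborSet w).ncard := fun w => by rw [hreg]; omega
  have hfix (h : Group.IsSolvable (localStabilizer Γ hadj v u)) :
      Group.IsSolvable (fixingSubgroup G ({u, v} : Set V)) :=
    isSolvable_fixingSubgroup Γ hadj hconn hfaith
      (fun _ _ => IsTwoArcTransitive.isSolvable_localStabilizer hadj h2arc hdeg huv.symm)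
      (Set.insert_nonempty u {v}) (by
        rintro w (rfl | rfl)
        exacts [⟨v, by simp, huv⟩, ⟨u, by simp, huv.symm⟩])
  have hpair : Nat.card ({u, v} : Set V) ≤ 2 := by
    rw [Nat.card_coe_set_eq, Set.ncard_pair huv.ne]
  refine ⟨⟨fun h => ?_, fun h => ?_⟩, ⟨fun h => ?_, fun h => ?_⟩⟩
  · have : Group.IsSolvable _ := h
    exact isSolvable_localStabilizer_of_isSolvable_stabilizer_pair Γ hadj
  · have := hfix h
    exact isSolvable_stabilizer_of_card_le_two hpair
  · have : Group.IsSolvable _ := h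
    exact Subgroup.isSolvable_map _ _
  · have : Group.IsSolvable _ := h
    have := hfix (Subgroup.isSolvable_of_le (Subgroup.map_mono le_top))
    exact isSolvable_stabilizer_of_isSolvable_fixingSubgroup_pair Γ hadj huv.symm

end Stmt6
end

section
/- Let Γ be a finite connected regular simple graph of valency d ≥ 3, let G ≤ Aut(Γ) with Γ (G,2)-arc-transitive, let {u,v} be an edge of Γ, and let r be a prime dividing d. Then G_{uv} has no nontrivial normal r-subgroup, and G_v^{[1]} has no nontrivial normal r-subgroup; that is, O_r(G_v^{[1]}) = 1 = O_r(G_{uv}). -/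
/-!
Since `r ∣ d`, `r` does not divide `|Γ(w) \ {x}| = d - 1`, so an `r`-subgroup of `G_{xw}` normalised
by `G_{xw}` fixes a point of `Γ(w) \ {x}`; as `G_{xw}` is transitive on that set (2-arc
transitivity), the subgroup fixes `Γ(w)` pointwise, i.e. lies in `G_w^{[1]}`. Applied to
`O_r(G_x^{[1]})`, which is normalised by `G_x`, this gives `O_r(G_x^{[1]}) ≤ O_r(G_w^{[1]})` along
every edge, hence equality, and by connectedness `O_r(G_v^{[1]})` fixes every vertex, so it is
trivial. Applied to a normal `r`-subgroup of `G_{uv}`, it puts that subgroup inside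
`O_r(G_v^{[1]}) = 1`.
-/

open MulAction

namespace Stmt7

/-- The kernel `G_v^{[1]}` of the action of `G_v` on the neighborhood `Γ(v)`,
as a subgroup of `G`: the elements fixing `v` and all its neighbors. -/
def kernel1 {V : Type*} (Γ : SimpleGraph V) (G : Type*) [Group G] [MulAction G V] (v : V) :
    Subgroup G :=
  stabilizer G v ⊓ ⨅ w ∈ Γ.neighborSet v, stabilizer G w

open Subgroup

section PCore

variable {G : Type*} [Group G] {p : ℕ}

variable (p) in
def normalPSubgroups (K : Subgroup G) : Set (Subgroup G) :=
  {N | N ≤ K ∧ IsPGroup p N ∧ K ≤ normalizer (N : Set G)}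

variable (p) in
/-- `O_p(K)`, realised inside the ambient group. -/
def pCore (K : Subgroup G) : Subgroup G := sSup (normalPSubgroups p K)

lemma bot_mem_normalPSubgroups (K : Subgroup G) : ⊥ ∈ normalPSubgroups p K :=
  ⟨bot_le, .of_bot, le_normalizer_of_normal⟩

lemma supClosed_normalPSubgroups (K : Subgroup G) : SupClosed (normalPSubgroups p K) := by
  rintro N₁ ⟨hN₁K, hN₁p, hKN₁⟩ N₂ ⟨hN₂K, hN₂p, hKN₂⟩
  exact ⟨sup_le hN₁K hN₂K, hN₁p.to_sup_of_normal_right' hN₂p (hN₁K.trans hKN₂),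
    (le_inf hKN₁ hKN₂).trans (normalizer_inf_normalizer_le_normalizer_sup N₁ N₂)⟩

lemma pCore_mem_normalPSubgroups [Finite G] (K : Subgroup G) :
    pCore p K ∈ normalPSubgroups p K :=
  (supClosed_normalPSubgroups K).sSup_mem (Set.toFinite _) (bot_mem_normalPSubgroups K) le_rfl

lemma pCore_le [Finite G] (K : Subgroup G) : pCore p K ≤ K :=
  (pCore_mem_normalPSubgroups K).1

lemma le_pCore {K N : Subgroup G} (hN : N ∈ normalPSubgroups p K) : N ≤ pCore p K :=
  le_sSup hN

lemma map_conj_mem_normalPSubgroups {K N : Subgroup G} (hN : N ∈ normalPSubgroups p K) {g : G}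
    (hg : g ∈ normalizer (K : Set G)) : N.map (MulAut.conj g) ∈ normalPSubgroups p K := by
  obtain ⟨hNK, hNp, hKN⟩ := hN
  have hK : K.map (MulAut.conj g) = K := mem_normalizer_iff_map_conj_eq.1 hg
  refine ⟨hK ▸ map_mono hNK, hNp.map _, ?_⟩
  calc K = K.map (MulAut.conj g) := hK.symm
    _ ≤ (normalizer (N : Set G)).map (MulAut.conj g) := map_mono hKN
    _ ≤ _ := le_normalizer_map (H := N) _

lemma normalizer_le_normalizer_pCore [Finite G] (K : Subgroup G) :
    normalizer (K : Set G) ≤ normalizer (pCore p K : Set G) := fun _ hg =>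
  mem_normalizer_fintype fun _ hn =>
    le_pCore (map_conj_mem_normalPSubgroups (pCore_mem_normalPSubgroups K) hg) (mem_map_of_mem _ hn)

lemma map_subtype_mem_normalPSubgroups {K : Subgroup G} {N : Subgroup K} (hN : N.Normal)
    (hNp : IsPGroup p N) : N.map K.subtype ∈ normalPSubgroups p K := by
  have : ((N.map K.subtype).subgroupOf K).Normal := by
    rwa [subgroupOf, comap_map_eq_self_of_injective K.subtype_injective]
  exact ⟨map_subtype_le N, hNp.map _, le_normalizer_of_normal_subgroupOf (map_subtype_le N)⟩

lemma eq_bot_of_map_subtype_le_bot {K : Subgroup G} {N : Subgroup K}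
    (h : N.map K.subtype ≤ ⊥) : N = ⊥ :=
  (map_eq_bot_iff_of_injective N K.subtype_injective).1 (le_bot_iff.1 h)

end PCore

lemma _root_.IsPGroup.smul_eq_self_of_isTransitive {G α : Type*} [Group G] [MulAction G α] {p : ℕ}
    [Fact p.Prime] {H L : Subgroup G} (hH : IsPGroup p H) (hL : L ≤ normalizer (H : Set G))
    {s : Set α} (hHs : ∀ h ∈ H, ∀ y ∈ s, h • y ∈ s) (hLs : ∀ y ∈ s, ∀ z ∈ s, ∃ l ∈ L, l • y = z)
    (hs : ¬ p ∣ s.ncard) {h : G} (hh : h ∈ H) {y : α} (hy : y ∈ s) : h • y = y := by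
  let S : SubMulAction H α := ⟨s, fun h y hy => hHs h h.2 y hy⟩
  obtain ⟨⟨y₀, hy₀⟩, hfix⟩ := hH.nonempty_fixed_point_of_prime_not_dvd_card S hs
  obtain ⟨l, hl, rfl⟩ := hLs y₀ hy₀ y hy
  have hconj : l⁻¹ * h * l ∈ H := ((mem_normalizer_iff''.1 (hL hl)) h).1 hh
  calc h • l • y₀ = l • (l⁻¹ * h * l) • y₀ := by rw [smul_smul, smul_smul]; group
    _ = l • y₀ := congrArg (l • ·) (congrArg Subtype.val (hfix ⟨_, hconj⟩))

lemma _root_.Nat.Prime.not_dvd_ncard_diff_singleton {α : Type*} {p : ℕ} (hp : p.Prime) {s : Set α}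
    (hs : s.Finite) (hps : p ∣ s.ncard) {x : α} (hx : x ∈ s) : ¬ p ∣ (s \ {x}).ncard := by
  have hpos : 0 < s.ncard := (Set.ncard_pos hs).2 ⟨x, hx⟩
  rw [Set.ncard_sdiff_singleton_of_mem hx]
  intro h
  exact hp.not_dvd_one (by simpa [Nat.sub_sub_self hpos] using Nat.dvd_sub hps h)

section Graph

variable {V : Type*} (G : Type*) [Group G] [MulAction G V] (Γ : SimpleGraph V)

def PreservesAdj : Prop := ∀ (g : G) ⦃a b : V⦄, Γ.Adj a b → Γ.Adj (g • a) (g • b)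

def IsTwoArcTransitive : Prop :=
  ∀ ⦃v0 v1 v2 w0 w1 w2 : V⦄, Γ.Adj v0 v1 → Γ.Adj v1 v2 → v0 ≠ v2 →
    Γ.Adj w0 w1 → Γ.Adj w1 w2 → w0 ≠ w2 → ∃ g : G, g • v0 = w0 ∧ g • v1 = w1 ∧ g • v2 = w2

variable {G Γ}

lemma mem_kernel1 {v : V} {g : G} :
    g ∈ kernel1 Γ G v ↔ g • v = v ∧ ∀ w, Γ.Adj v w → g • w = w := by
  simp [kernel1, mem_inf, mem_iInf, SimpleGraph.mem_neighborSet, mem_stabilizer_iff]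

lemma kernel1_le_stabilizer_inf {x w : V} (hwx : Γ.Adj w x) :
    kernel1 Γ G w ≤ stabilizer G x ⊓ stabilizer G w := fun _ hg =>
  ⟨(mem_kernel1.1 hg).2 x hwx, (mem_kernel1.1 hg).1⟩

lemma stabilizer_le_normalizer_kernel1 [Finite G] (hadj : PreservesAdj G Γ) (x : V) :
    stabilizer G x ≤ normalizer (kernel1 Γ G x : Set G) := by
  intro g hg
  have hgx : g⁻¹ • x = x := inv_smul_eq_iff.2 (mem_stabilizer_iff.1 hg).symm
  refine mem_normalizer_fintype fun k hk => mem_kernel1.2 ⟨?_, fun y hxy => ?_⟩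
  · simp only [mul_smul, hgx, (mem_kernel1.1 hk).1, mem_stabilizer_iff.1 hg]
  · have : Γ.Adj x (g⁻¹ • y) := hgx ▸ hadj g⁻¹ hxy
    simp only [mul_smul, (mem_kernel1.1 hk).2 _ this, smul_inv_smul]

lemma pCore_kernel1_mem_normalPSubgroups [Finite G] {p : ℕ} (hadj : PreservesAdj G Γ) {x w : V}
    (hxw : Γ.Adj x w) :
    pCore p (kernel1 Γ G x) ∈ normalPSubgroups p (stabilizer G x ⊓ stabilizer G w) :=
  ⟨(pCore_le _).trans ((kernel1_le_stabilizer_inf hxw).trans (by rw [inf_comm])),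
    (pCore_mem_normalPSubgroups _).2.1,
    inf_le_left.trans ((stabilizer_le_normalizer_kernel1 hadj x).trans
      (normalizer_le_normalizer_pCore _))⟩

lemma smul_mem_neighborSet_diff (hadj : PreservesAdj G Γ) {x w y : V} {g : G}
    (hg : g ∈ stabilizer G x ⊓ stabilizer G w) (hy : y ∈ Γ.neighborSet w \ {x}) :
    g • y ∈ Γ.neighborSet w \ {x} := by
  obtain ⟨hgx, hgw⟩ := mem_inf.1 hg
  rw [mem_stabilizer_iff] at hgx hgw
  refine ⟨hgw ▸ hadj g hy.1, fun hgy => hy.2 ?_⟩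
  exact (smul_left_cancel_iff g).1 ((Set.mem_singleton_iff.1 hgy).trans hgx.symm)

lemma IsTwoArcTransitive.exists_smul_eq (h2arc : IsTwoArcTransitive G Γ) {x w y z : V}
    (hxw : Γ.Adj x w) (hy : y ∈ Γ.neighborSet w \ {x}) (hz : z ∈ Γ.neighborSet w \ {x}) :
    ∃ g ∈ stabilizer G x ⊓ stabilizer G w, g • y = z := by
  obtain ⟨g, hgx, hgw, hgy⟩ := h2arc hxw hy.1 (Ne.symm hy.2) hxw hz.1 (Ne.symm hz.2)
  exact ⟨g, ⟨hgx, hgw⟩, hgy⟩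

lemma le_kernel1_of_mem_normalPSubgroups [Finite V] {d r : ℕ} (hadj : PreservesAdj G Γ)
    (h2arc : IsTwoArcTransitive G Γ) (hreg : ∀ w : V, (Γ.neighborSet w).ncard = d)
    (hr : r.Prime) (hrd : r ∣ d) {x w : V} (hxw : Γ.Adj x w) {H : Subgroup G}
    (hH : H ∈ normalPSubgroups r (stabilizer G x ⊓ stabilizer G w)) : H ≤ kernel1 Γ G w := by
  have : Fact r.Prime := ⟨hr⟩
  obtain ⟨hHxw, hHr, hnorm⟩ := hH
  have hcard : ¬ r ∣ (Γ.neighborSet w \ {x}).ncard :=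
    hr.not_dvd_ncard_diff_singleton (Set.toFinite _) (hreg w ▸ hrd) hxw.symm
  intro h hh
  refine mem_kernel1.2 ⟨(mem_inf.1 (hHxw hh)).2, fun y hwy => ?_⟩
  by_cases hyx : y = x
  · exact hyx ▸ (mem_inf.1 (hHxw hh)).1
  · exact hHr.smul_eq_self_of_isTransitive hnorm
      (fun h hh y hy => smul_mem_neighborSet_diff hadj (hHxw hh) hy)
      (fun y hy z hz => h2arc.exists_smul_eq hxw hy hz) hcard hh ⟨hwy, hyx⟩

lemma le_pCore_kernel1_of_mem_normalPSubgroups [Finite V] {d r : ℕ} (hadj : PreservesAdj G Γ)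
    (h2arc : IsTwoArcTransitive G Γ) (hreg : ∀ w : V, (Γ.neighborSet w).ncard = d)
    (hr : r.Prime) (hrd : r ∣ d) {x w : V} (hxw : Γ.Adj x w) {H : Subgroup G}
    (hH : H ∈ normalPSubgroups r (stabilizer G x ⊓ stabilizer G w)) :
    H ≤ pCore r (kernel1 Γ G w) :=
  le_pCore ⟨le_kernel1_of_mem_normalPSubgroups hadj h2arc hreg hr hrd hxw hH, hH.2.1,
    (kernel1_le_stabilizer_inf hxw.symm).trans hH.2.2⟩

end Graph

section Propagation

variable {V G : Type*} [Finite V] [Group G] [Finite G] [MulAction G V] {Γ : SimpleGraph V}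
  {d r : ℕ}

lemma pCore_kernel1_le_of_adj (hadj : PreservesAdj G Γ) (h2arc : IsTwoArcTransitive G Γ)
    (hreg : ∀ w : V, (Γ.neighborSet w).ncard = d) (hr : r.Prime) (hrd : r ∣ d) {x w : V}
    (hxw : Γ.Adj x w) : pCore r (kernel1 Γ G x) ≤ pCore r (kernel1 Γ G w) :=
  le_pCore_kernel1_of_mem_normalPSubgroups hadj h2arc hreg hr hrd hxw
    (pCore_kernel1_mem_normalPSubgroups hadj hxw)

lemma pCore_kernel1_eq_of_reachable (hadj : PreservesAdj G Γ) (h2arc : IsTwoArcTransitive G Γ)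
    (hreg : ∀ w : V, (Γ.neighborSet w).ncard = d) (hr : r.Prime) (hrd : r ∣ d) {x w : V}
    (hxw : Γ.Reachable x w) : pCore r (kernel1 Γ G x) = pCore r (kernel1 Γ G w) := by
  obtain ⟨walk⟩ := hxw
  induction walk with
  | nil => rfl
  | cons hadj' _ ih =>
    exact (le_antisymm (pCore_kernel1_le_of_adj hadj h2arc hreg hr hrd hadj')
      (pCore_kernel1_le_of_adj hadj h2arc hreg hr hrd hadj'.symm)).trans ih

lemma pCore_kernel1_eq_bot (hadj : PreservesAdj G Γ) (h2arc : IsTwoArcTransitive G Γ)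
    (hreg : ∀ w : V, (Γ.neighborSet w).ncard = d) (hr : r.Prime) (hrd : r ∣ d)
    (hconn : Γ.Connected) (hfaith : ∀ g : G, (∀ x : V, g • x = x) → g = 1) (v : V) :
    pCore r (kernel1 Γ G v) = ⊥ := by
  refine eq_bot_iff.2 fun g hg => hfaith g fun x => ?_
  rw [pCore_kernel1_eq_of_reachable hadj h2arc hreg hr hrd (hconn.preconnected v x)] at hg
  exact (mem_kernel1.1 (pCore_le _ hg)).1

end Propagation

lemma finite_of_eq_one_of_forall_smul_eq_self {V G : Type*} [Finite V] [Group G] [MulAction G V]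
    (hfaith : ∀ g : G, (∀ x : V, g • x = x) → g = 1) : Finite G :=
  have : FaithfulSMul G V := ⟨fun {g₁ g₂} h =>
    (inv_mul_eq_one.1 (hfaith _ fun x => by rw [mul_smul, h, inv_smul_smul])).symm⟩
  Finite.of_injective (MulAction.toPerm : G → Equiv.Perm V) MulAction.toPerm_injective

theorem stmt_7_general {V G : Type*} [Fintype V] [Group G] [MulAction G V]
    (Γ : SimpleGraph V) (d : ℕ)
    (hreg : ∀ w : V, (Γ.neighborSet w).ncard = d)
    (hconn : Γ.Connected)
    (hadj : ∀ (g : G) ⦃a b : V⦄, Γ.Adj a b → Γ.Adj (g • a) (g • b))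
    (hfaith : ∀ g : G, (∀ x : V, g • x = x) → g = 1)
    (h2arc : ∀ ⦃v0 v1 v2 w0 w1 w2 : V⦄, Γ.Adj v0 v1 → Γ.Adj v1 v2 → v0 ≠ v2 →
      Γ.Adj w0 w1 → Γ.Adj w1 w2 → w0 ≠ w2 →
        ∃ g : G, g • v0 = w0 ∧ g • v1 = w1 ∧ g • v2 = w2)
    {u v : V} (huv : Γ.Adj u v)
    (r : ℕ) (hr : r.Prime) (hrd : r ∣ d) :
    (∀ N : Subgroup (stabilizer G u ⊓ stabilizer G v : Subgroup G),
      N.Normal → IsPGroup r N → N = ⊥) ∧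
    (∀ N : Subgroup (kernel1 Γ G v), N.Normal → IsPGroup r N → N = ⊥) := by
  have : Finite G := finite_of_eq_one_of_forall_smul_eq_self hfaith
  have hcore : pCore r (kernel1 Γ G v) = ⊥ :=
    pCore_kernel1_eq_bot hadj h2arc hreg hr hrd hconn hfaith v
  refine ⟨fun N hN hNr => eq_bot_of_map_subtype_le_bot ?_,
    fun N hN hNr => eq_bot_of_map_subtype_le_bot ?_⟩
  · exact hcore ▸ le_pCore_kernel1_of_mem_normalPSubgroups hadj h2arc hreg hr hrd huv
      (map_subtype_mem_normalPSubgroups hN hNr)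
  · exact hcore ▸ le_pCore (map_subtype_mem_normalPSubgroups hN hNr)

/-- Let `Γ` be a finite connected regular graph of valency `d ≥ 3`,
`G ≤ Aut Γ` with `Γ` `(G,2)`-arc-transitive, `{u,v}` an edge, and `r` a prime dividing
`d`. Then `O_r(G_v^{[1]}) = 1 = O_r(G_{uv})`: neither `G_{uv}` nor `G_v^{[1]}` has a
nontrivial normal `r`-subgroup. -/
theorem stmt_7 {V G : Type*} [Fintype V] [Group G] [MulAction G V]
    (Γ : SimpleGraph V) (d : ℕ) (hd : 3 ≤ d)
    (hreg : ∀ w : V, (Γ.neighborSet w).ncard = d)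
    (hconn : Γ.Connected)
    (hadj : ∀ (g : G) ⦃a b : V⦄, Γ.Adj a b → Γ.Adj (g • a) (g • b))
    (hfaith : ∀ g : G, (∀ x : V, g • x = x) → g = 1)
    (h2arc : ∀ ⦃v0 v1 v2 w0 w1 w2 : V⦄, Γ.Adj v0 v1 → Γ.Adj v1 v2 → v0 ≠ v2 →
      Γ.Adj w0 w1 → Γ.Adj w1 w2 → w0 ≠ w2 →
        ∃ g : G, g • v0 = w0 ∧ g • v1 = w1 ∧ g • v2 = w2)
    {u v : V} (huv : Γ.Adj u v)
    (r : ℕ) (hr : r.Prime) (hrd : r ∣ d) :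
    (∀ N : Subgroup (stabilizer G u ⊓ stabilizer G v : Subgroup G),
      N.Normal → IsPGroup r N → N = ⊥) ∧
    (∀ N : Subgroup (kernel1 Γ G v), N.Normal → IsPGroup r N → N = ⊥) :=
  stmt_7_general Γ d hreg hconn hadj hfaith h2arc huv r hr hrd

end Stmt7
end

section
/- Let G be a finite group acting faithfully, transitively and primitively on a finite set Ω with |Ω| ≥ 2 (equivalently, the action is faithful and transitive and each point stabilizer is a maximal subgroup of G). Let ω ∈ Ω, let H = G_ω be the stabilizer of ω, and let p be a prime. If P is a Sylow p-subgroup of H with P ≠ 1 and P normal in H, then P is a Sylow p-subgroup of G. -/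
/-!
The stabilizer `H = G_ω` normalizes `P`, so by maximality `N_G(P)` is `H` or `G`. It is not `G`:
a normal subgroup inside a point stabilizer of a faithful transitive action fixes every point,
hence is trivial. So `N_G(P) = H`. If `P` were properly contained in a Sylow subgroup `Q` of `G`,
the normalizer condition in the nilpotent group `Q` would give a `p`-subgroup `N_Q(P) > P` of
`N_G(P) = H`, contradicting maximality of `P` among the `p`-subgroups of `H`.
-/

open MulAction Subgroup

section

variable {G : Type*} [Group G]

theorem Subgroup.eq_of_normalizer_inf_le {P Q : Subgroup G} [Group.IsNilpotent Q] (hPQ : P ≤ Q)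
    (h : normalizer (P : Set G) ⊓ Q ≤ P) : P = Q := by
  have hself : normalizer (P.subgroupOf Q : Set Q) = P.subgroupOf Q := by
    rw [← subgroupOf_normalizer_eq hPQ]
    exact le_antisymm (fun x hx => h ⟨hx, x.2⟩) (subgroupOf_mono _ le_normalizer)
  have htop := (normalizerCondition_iff_only_full_group_self_normalizing.mp
    Group.normalizerCondition_of_isNilpotent) _ hself
  exact le_antisymm hPQ (subgroupOf_eq_top.mp htop)

theorem Sylow.map_subtype_eq_of_le {p : ℕ} {H K : Subgroup G} (P : Sylow p H) (hK : IsPGroup p K)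
    (hKH : K ≤ H) (hPK : (P : Subgroup H).map H.subtype ≤ K) :
    (P : Subgroup H).map H.subtype = K := by
  have hP : K.subgroupOf H = P :=
    P.is_maximal' hK.comap_subtype (map_le_iff_le_comap.mp hPK)
  rw [← hP, subgroupOf_map_subtype, inf_eq_left.mpr hKH]

theorem Sylow.exists_coe_eq_map_subtype_of_normalizer_le [Finite G] {p : ℕ} [Fact p.Prime]
    {H : Subgroup G} (P : Sylow p H)
    (hN : normalizer (((P : Subgroup H).map H.subtype : Subgroup G) : Set G) ≤ H) :
    ∃ Q : Sylow p G, (Q : Subgroup G) = (P : Subgroup H).map H.subtype := by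
  obtain ⟨Q, hPQ⟩ := (P.isPGroup'.map H.subtype).exists_le_sylow
  have : Group.IsNilpotent (Q : Subgroup G) := Q.isPGroup'.isNilpotent
  refine ⟨Q, (eq_of_normalizer_inf_le hPQ ?_).symm⟩
  exact (P.map_subtype_eq_of_le (Q.isPGroup'.to_inf_right) (inf_le_left.trans hN)
    (le_inf le_normalizer hPQ)).ge

theorem MulAction.eq_bot_of_normal_of_le_stabilizer {Ω : Type*} [MulAction G Ω] [FaithfulSMul G Ω]
    [IsPretransitive G Ω] {N : Subgroup G} [N.Normal] {ω : Ω} (hN : N ≤ stabilizer G ω) :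
    N = ⊥ := by
  refine eq_bot_iff.mpr fun g hg => mem_bot.mpr <| eq_of_smul_eq_smul (α := Ω) fun x => ?_
  obtain ⟨a, rfl⟩ := exists_smul_eq G ω x
  have hconj : (a⁻¹ * g * a) • ω = ω := hN (‹N.Normal›.conj_mem' g hg a)
  rw [one_smul]
  conv_rhs => rw [← hconj]
  simp only [smul_smul, mul_assoc, mul_inv_cancel_left]

end

theorem stmt_11_general {G Ω : Type*} [Group G] [Finite G] [MulAction G Ω]
    (hfaith : ∀ g : G, (∀ x : Ω, g • x = x) → g = 1)
    (htrans : MulAction.IsPretransitive G Ω)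
    (hprim : ∀ x : Ω, IsCoatom (stabilizer G x))
    (ω : Ω) (p : ℕ) [Fact p.Prime]
    (P : Sylow p (stabilizer G ω))
    (hP1 : (P : Subgroup (stabilizer G ω)) ≠ ⊥)
    (hPnormal : (P : Subgroup (stabilizer G ω)).Normal) :
    ∃ Q : Sylow p G,
      (Q : Subgroup G) =
        Subgroup.map (stabilizer G ω).subtype (P : Subgroup (stabilizer G ω)) := by
  have : FaithfulSMul G Ω :=
    ⟨fun h => mul_inv_eq_one.mp (hfaith _ fun x => by rw [mul_smul, h, smul_inv_smul])⟩
  have hinj := (stabilizer G ω).subtype_injective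
  set P' := (P : Subgroup (stabilizer G ω)).map (stabilizer G ω).subtype
  have hP'H : P' ≤ stabilizer G ω := map_subtype_le _
  have hHN : stabilizer G ω ≤ normalizer (P' : Set G) := by
    rwa [← normal_subgroupOf_iff_le_normalizer hP'H, subgroupOf,
      comap_map_eq_self_of_injective hinj]
  rcases (hprim ω).le_iff.mp hHN with hN | hN
  · have : P'.Normal := normalizer_eq_top_iff.mp hN
    exact absurd ((map_eq_bot_iff_of_injective _ hinj).mp
      (eq_bot_of_normal_of_le_stabilizer hP'H)) hP1
  · exact P.exists_coe_eq_map_subtype_of_normalizer_le hN.le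

/-- Let `G` be a finite group acting faithfully, transitively and
primitively on a finite set `Ω` with `|Ω| ≥ 2` (primitivity being encoded by the point
stabilizers being maximal subgroups). Let `ω ∈ Ω`, `H = G_ω`, and `p` a prime. If `P`
is a nontrivial normal Sylow `p`-subgroup of `H`, then `P` is a Sylow `p`-subgroup
of `G`. -/
theorem stmt_11 {G Ω : Type*} [Group G] [Finite G] [MulAction G Ω] [Finite Ω]
    (hfaith : ∀ g : G, (∀ x : Ω, g • x = x) → g = 1)
    (htrans : MulAction.IsPretransitive G Ω)
    (hprim : ∀ x : Ω, IsCoatom (stabilizer G x))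
    (hcard : 2 ≤ Nat.card Ω)
    (ω : Ω) (p : ℕ) [Fact p.Prime]
    (P : Sylow p (stabilizer G ω))
    (hP1 : (P : Subgroup (stabilizer G ω)) ≠ ⊥)
    (hPnormal : (P : Subgroup (stabilizer G ω)).Normal) :
    ∃ Q : Sylow p G,
      (Q : Subgroup G) =
        Subgroup.map (stabilizer G ω).subtype (P : Subgroup (stabilizer G ω)) :=
  stmt_11_general hfaith htrans hprim ω p P hP1 hPnormal
end

section
/- Let p be a prime and let Γ be a finite connected regular simple graph of valency d ≥ 3 such that d − 1 is a power of p. Let X ≤ Aut(Γ) with Γ (X,2)-arc-transitive, let {u,v} be an edge of Γ, and assume X_{uv}^{[1]} = 1. Then: (1) for every prime r ≠ p, X_{uv} has no nontrivial normal r-subgroup (equivalently, the Fitting subgroup of X_{uv} equals O_p(X_{uv})); (2) for every prime r ≠ p, every normal r-subgroup of the setwise edge-stabilizer X_{{u,v}} has order at most 2; (3) O_p(X_{uv}) is contained in O_p(X_{{u,v}}) with index |O_p(X_{{u,v}}) : O_p(X_{uv})| ≤ 2. Consequently the Fitting subgroup of X_{{u,v}} contains O_p(X_{{u,v}}) with index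 at most 2. -/
/-!
A normal `r`-subgroup `N` of `X_{uv}` with `r ≠ p` acts on `Γ(u) \ {v}`, a set of size `p ^ k`,
so it fixes a point there; since `X_{uv}` normalizes `N` and is transitive on `Γ(u) \ {v}` by
2-arc-transitivity, `N` fixes all of `Γ(u)`, and likewise all of `Γ(v)`, so `N ≤ X_{uv}^{[1]} = 1`.
Every subgroup `H ≤ X_{{u,v}}` has `|H : H ∩ X_{uv}| ≤ 2`, which gives (2) and, as `O_p(X_{uv})` is
characteristic in `X_{uv} ⊴ X_{{u,v}}`, also (3). Finally the Fitting subgroup of `X_{{u,v}}` is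
the product of its Sylow subgroups, all normal in `X_{{u,v}}`: the Sylow `p`-subgroup lies in
`O_p(X_{{u,v}})` and the others have order at most `2` by (2).
-/

open MulAction
open scoped Pointwise

namespace Stmt12

/-- The kernel `X_v^{[1]}` of the action of `X_v` on the neighborhood `Γ(v)`,
as a subgroup of `X`: the elements fixing `v` and all its neighbors. -/
def kernel1 {V : Type*} (Γ : SimpleGraph V) (X : Type*) [Group X] [MulAction X V] (v : V) :
    Subgroup X :=
  stabilizer X v ⊓ ⨅ w ∈ Γ.neighborSet v, stabilizer X w

/-- `N` is a subgroup of `A` which is normalized by `A`. -/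
def NormalIn {X : Type*} [Group X] (A N : Subgroup X) : Prop :=
  N ≤ A ∧ ∀ a ∈ A, ∀ n ∈ N, a * n * a⁻¹ ∈ N

/-- `P = O_p(A)`: `P` is the largest `p`-subgroup of `A` which is normal in `A`. -/
def IsMaxNormalPIn {X : Type*} [Group X] (p : ℕ) (A P : Subgroup X) : Prop :=
  NormalIn A P ∧ IsPGroup p P ∧
    ∀ Q : Subgroup X, NormalIn A Q → IsPGroup p Q → Q ≤ P

/-- `F = Fit(A)`: `F` is the largest nilpotent subgroup of `A` which is normal in `A`,
i.e. the Fitting subgroup of `A`. -/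
def IsFittingIn {X : Type*} [Group X] (A F : Subgroup X) : Prop :=
  NormalIn A F ∧ Group.IsNilpotent F ∧
    ∀ N : Subgroup X, NormalIn A N → Group.IsNilpotent N → N ≤ F

section NormalIn

variable {X : Type*} [Group X]

theorem NormalIn.inf_of_le {A B N : Subgroup X} (hN : NormalIn A N) (hBA : B ≤ A) :
    NormalIn B (N ⊓ B) :=
  ⟨inf_le_right, fun b hb n hn =>
    ⟨hN.2 b (hBA hb) n hn.1, B.mul_mem (B.mul_mem hb hn.2) (B.inv_mem hb)⟩⟩

theorem NormalIn.conj_inv_mem {A N : Subgroup X} (hN : NormalIn A N) {a : X} (ha : a ∈ A)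
    {n : X} (hn : n ∈ N) : a⁻¹ * n * a ∈ N := by
  simpa using hN.2 a⁻¹ (inv_mem ha) n hn

theorem IsMaxNormalPIn.normalIn {p : ℕ} {A B P : Subgroup X} (hP : IsMaxNormalPIn p B P)
    (hB : NormalIn A B) : NormalIn A P := by
  refine ⟨hP.1.1.trans hB.1, fun a ha n hn => ?_⟩
  let c := (MulAut.conj a).toMonoidHom
  suffices P.map c ≤ P from this (Subgroup.mem_map_of_mem c hn)
  refine hP.2.2 _ ⟨?_, ?_⟩ (hP.2.1.map c)
  · rintro _ ⟨y, hy, rfl⟩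
    exact hB.2 a ha y (hP.1.1 hy)
  · rintro b hb _ ⟨y, hy, rfl⟩
    refine ⟨(a⁻¹ * b * a) * y * (a⁻¹ * b * a)⁻¹, hP.1.2 _ (hB.conj_inv_mem ha hb) y hy, ?_⟩
    simp only [c, MulEquiv.coe_toMonoidHom, MulAut.conj_apply]
    group

end NormalIn

section Action

variable {V X : Type*} [Group X] [MulAction X V]

theorem _root_.IsPGroup.exists_fixed_mem_of_not_dvd_ncard {r : ℕ} [Fact r.Prime] {N : Subgroup X}
    (hNr : IsPGroup r N) {S : Set V} (hNS : ∀ n ∈ N, ∀ s ∈ S, n • s ∈ S)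
    (hS : ¬ r ∣ S.ncard) : ∃ s ∈ S, ∀ n ∈ N, n • s = s := by
  let S' : SubMulAction N V := ⟨S, fun n s hs => hNS n n.2 s hs⟩
  obtain ⟨⟨s, hs⟩, hfix⟩ := hNr.nonempty_fixed_point_of_prime_not_dvd_card S'
    (by change ¬ r ∣ Nat.card S; rwa [Nat.card_coe_set_eq])
  exact ⟨s, hs, fun n hn => congrArg Subtype.val (hfix ⟨n, hn⟩)⟩

theorem NormalIn.smul_eq_self_of_isPretransitive {A N : Subgroup X} (hN : NormalIn A N)
    {S : Set V} (htrans : ∀ s ∈ S, ∀ t ∈ S, ∃ g ∈ A, g • s = t) {s₀ : V} (hs₀ : s₀ ∈ S)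
    (hfix : ∀ n ∈ N, n • s₀ = s₀) : ∀ n ∈ N, ∀ s ∈ S, n • s = s := by
  intro n hn s hs
  obtain ⟨g, hgA, rfl⟩ := htrans s₀ hs₀ s hs
  calc n • g • s₀ = g • (g⁻¹ * n * g) • s₀ := by simp [mul_smul]
    _ = g • s₀ := by rw [hfix _ (hN.conj_inv_mem hgA hn)]

theorem smul_eq_of_mem_stabilizer_pair {u v : V} {g : X}
    (hg : g ∈ stabilizer X ({u, v} : Set V)) (hu : g • u = u) : g • v = v := by
  have hv : g • v ∈ ({u, v} : Set V) := (mem_stabilizer_set.mp hg v).mpr (by simp)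
  rcases hv with hv | hv
  · rw [← hu] at hv
    rw [smul_left_cancel g hv, hu]
  · exact hv

theorem normalIn_stabilizer_pair (u v : V) :
    NormalIn (stabilizer X ({u, v} : Set V)) (stabilizer X u ⊓ stabilizer X v) := by
  have hfix : ∀ b ∈ stabilizer X u ⊓ stabilizer X v, ∀ x ∈ ({u, v} : Set V), b • x = x := by
    rintro b ⟨hbu, hbv⟩ x (rfl | rfl)
    exacts [hbu, hbv]
  refine ⟨fun b hb => ?_, fun a ha b hb => ?_⟩
  · rw [mem_stabilizer_iff, Set.smul_set_insert, Set.smul_set_singleton, hb.1, hb.2]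
  · have hconj : ∀ x ∈ ({u, v} : Set V), (a * b * a⁻¹) • x = x := fun x hx => by
      rw [mul_smul, mul_smul, hfix b hb _ ((mem_stabilizer_set.mp (inv_mem ha) x).mpr hx),
        smul_inv_smul]
    exact ⟨hconj u (by simp), hconj v (by simp)⟩

theorem relIndex_stabilizer_le_two {u v : V} {H : Subgroup X}
    (hH : H ≤ stabilizer X ({u, v} : Set V)) : (stabilizer X u).relIndex H ≤ 2 := by
  have horbit : orbit H u ⊆ ({u, v} : Set V) := by
    rintro _ ⟨h, rfl⟩
    exact (mem_stabilizer_set.mp (hH h.2) u).mpr (by simp)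
  calc (stabilizer X u).relIndex H = (orbit H u).ncard := by
        rw [Subgroup.relIndex, ← index_stabilizer]; rfl
    _ ≤ ({u, v} : Set V).ncard := Set.ncard_le_ncard horbit
    _ ≤ 2 := (Set.ncard_insert_le _ _).trans (by simp)

theorem card_le_two_of_normalIn_stabilizer_pair {u v : V} {r : ℕ}
    (htriv : ∀ N : Subgroup X,
      NormalIn (stabilizer X u ⊓ stabilizer X v) N → IsPGroup r N → N = ⊥)
    {N : Subgroup X} (hN : NormalIn (stabilizer X ({u, v} : Set V)) N) (hNr : IsPGroup r N) :
    Nat.card N ≤ 2 := by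
  have hbot : stabilizer X u ⊓ N = ⊥ := by
    have := htriv _ (hN.inf_of_le (normalIn_stabilizer_pair u v).1) (hNr.to_le inf_le_left)
    rw [eq_bot_iff, ← this]
    rintro g ⟨hgu, hgN⟩
    exact ⟨hgN, hgu, smul_eq_of_mem_stabilizer_pair (hN.1 hgN) hgu⟩
  calc Nat.card N = (stabilizer X u ⊓ N).relIndex N := by rw [hbot, Subgroup.relIndex_bot_left]
    _ = (stabilizer X u).relIndex N := Subgroup.inf_relIndex_right _ _
    _ ≤ 2 := relIndex_stabilizer_le_two hN.1

theorem IsMaxNormalPIn.le_and_relIndex_le_two {p : ℕ} {u v : V} {P Q : Subgroup X}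
    (hP : IsMaxNormalPIn p (stabilizer X u ⊓ stabilizer X v) P)
    (hQ : IsMaxNormalPIn p (stabilizer X ({u, v} : Set V)) Q) :
    P ≤ Q ∧ P.relIndex Q ≤ 2 := by
  have hQP : stabilizer X u ⊓ Q = P ⊓ Q := by
    refine le_antisymm (fun g ⟨hgu, hgQ⟩ => ⟨?_, hgQ⟩)
      (inf_le_inf_right _ (hP.1.1.trans inf_le_left))
    refine hP.2.2 _ (hQ.1.inf_of_le (normalIn_stabilizer_pair u v).1)
      (hQ.2.1.to_le inf_le_left) ?_
    exact ⟨hgQ, hgu, smul_eq_of_mem_stabilizer_pair (hQ.1.1 hgQ) hgu⟩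
  refine ⟨hQ.2.2 P (hP.normalIn (normalIn_stabilizer_pair u v)) hP.2.1, ?_⟩
  rw [← Subgroup.inf_relIndex_right, ← hQP, Subgroup.inf_relIndex_right]
  exact relIndex_stabilizer_le_two hQ.1.1

end Action

theorem _root_.Nat.le_two_of_forall_pow_factorization_le_two {m : ℕ} (hm : m ≠ 0)
    (h : ∀ q, q ^ m.factorization q ≤ 2) : m ≤ 2 := by
  refine Nat.le_of_dvd two_pos ((Nat.factorization_le_iff_dvd hm two_ne_zero).mp fun q => ?_)
  rcases Nat.eq_zero_or_pos (m.factorization q) with h0 | hpos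
  · simp [h0]
  have hq : q.Prime := Nat.prime_of_mem_primeFactors (Finsupp.mem_support_iff.mpr hpos.ne')
  have hq2 : q = 2 := le_antisymm ((Nat.le_self_pow hpos.ne' q).trans (h q)) hq.two_le
  subst hq2
  rw [Nat.prime_two.factorization_self]
  exact (Nat.pow_le_pow_iff_right one_lt_two).mp (h 2)

theorem _root_.Sylow.index_eq_ordCompl {G : Type*} [Group G] [Finite G] {p : ℕ} [Fact p.Prime]
    (P : Sylow p G) : P.index = ordCompl[p] (Nat.card G) := by
  have h := Subgroup.card_mul_index (P : Subgroup G)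
  rw [P.card_eq_multiplicity] at h
  exact (Nat.div_eq_of_eq_mul_right (pow_pos (Fact.out : p.Prime).pos _) h.symm).symm

theorem _root_.Sylow.le_map_subtype_of_isPGroup {X : Type*} [Group X] {F : Subgroup X} {q : ℕ}
    [Fact q.Prime] [Finite F] (S : Sylow q F) [(S : Subgroup F).Normal] {K : Subgroup X}
    (hKF : K ≤ F) (hK : IsPGroup q K) : K ≤ (S : Subgroup F).map F.subtype := by
  obtain ⟨T, hT⟩ := (hK.comap_of_injective F.subtype F.subtype_injective).exists_le_sylow
  have : Subsingleton (Sylow q F) := (Sylow.unique_of_normal S ‹_›).instSubsingleton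
  rw [← Subgroup.map_subgroupOf_eq_of_le hKF]
  exact Subgroup.map_mono (Subsingleton.elim T S ▸ hT)

theorem NormalIn.map_sylow {X : Type*} [Group X] [Finite X] {E F : Subgroup X}
    (hF : NormalIn E F) [Group.IsNilpotent F] {q : ℕ} [Fact q.Prime] (S : Sylow q F) :
    NormalIn E ((S : Subgroup F).map F.subtype) := by
  refine ⟨(Subgroup.map_subtype_le _).trans hF.1, fun a ha x hx => ?_⟩
  let c := (MulAut.conj a).toMonoidHom
  refine S.le_map_subtype_of_isPGroup ?_ ((S.isPGroup'.map _).map c) (Subgroup.mem_map_of_mem c hx)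
  rintro _ ⟨y, hy, rfl⟩
  exact hF.2 a ha y (Subgroup.map_subtype_le _ hy)

theorem IsFittingIn.le_and_relIndex_le_two {X : Type*} [Group X] [Finite X] {p : ℕ}
    (hp : p.Prime) {E Q F : Subgroup X}
    (hsmall : ∀ r : ℕ, r.Prime → r ≠ p → ∀ N : Subgroup X,
      NormalIn E N → IsPGroup r N → Nat.card N ≤ 2)
    (hQ : IsMaxNormalPIn p E Q) (hF : IsFittingIn E F) :
    Q ≤ F ∧ Q.relIndex F ≤ 2 := by
  have := Fact.mk hp
  have := hF.2.1
  have hQF : Q ≤ F := hF.2.2 Q hQ.1 hQ.2.1.isNilpotent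
  obtain ⟨P⟩ : Nonempty (Sylow p F) := inferInstance
  have hPQ : (P : Subgroup F).map F.subtype ≤ Q := hQ.2.2 _ (hF.1.map_sylow P) (P.isPGroup'.map _)
  have hPF : ((P : Subgroup F).map F.subtype).relIndex F = ordCompl[p] (Nat.card F) := by
    rw [Subgroup.relIndex, ← Subgroup.comap_subtype,
      Subgroup.comap_map_eq_self_of_injective F.subtype_injective, P.index_eq_ordCompl]
  -- `ordCompl[p] |F|` is the product of the orders of the Sylow `q`-subgroups of `F`, `q ≠ p`;
  -- these are normal in `E`, so each has order at most `2`
  have hcompl : ∀ q, q ^ (ordCompl[p] (Nat.card F)).factorization q ≤ 2 := by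
    intro q
    rw [Nat.factorization_ordCompl]
    by_cases hqp : q = p
    · simp [hqp]
    rw [Finsupp.erase_ne hqp]
    by_cases hq : q.Prime
    · have := Fact.mk hq
      obtain ⟨S⟩ : Nonempty (Sylow q F) := inferInstance
      rw [← S.card_eq_multiplicity, ← Subgroup.card_map_of_injective F.subtype_injective]
      exact hsmall q hq hqp _ (hF.1.map_sylow S) (S.isPGroup'.map _)
    · simp [Nat.factorization_eq_zero_of_not_prime _ hq]
  have hpos : 0 < ordCompl[p] (Nat.card F) := Nat.ordCompl_pos p Nat.card_pos.ne'
  have hdvd : Q.relIndex F ∣ ((P : Subgroup F).map F.subtype).relIndex F :=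
    Dvd.intro_left _ (Subgroup.relIndex_mul_relIndex _ _ _ hPQ hQF)
  rw [hPF] at hdvd
  exact ⟨hQF, (Nat.le_of_dvd hpos hdvd).trans
    (Nat.le_two_of_forall_pow_factorization_le_two hpos.ne' hcompl)⟩

section Graph

variable {V X : Type*} [Group X] [MulAction X V] {Γ : SimpleGraph V}

theorem mem_kernel1 {g : X} {v : V} :
    g ∈ kernel1 Γ X v ↔ g • v = v ∧ ∀ w, Γ.Adj v w → g • w = w := by
  simp [kernel1]

theorem finite_of_kernel1_inf_eq_bot [Finite V] {u v : V}
    (hker : kernel1 Γ X u ⊓ kernel1 Γ X v = ⊥) : Finite X := by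
  have : FaithfulSMul X V := ⟨fun {g h} hgh => by
    have hmem : h⁻¹ * g ∈ kernel1 Γ X u ⊓ kernel1 Γ X v := by
      simp only [Subgroup.mem_inf, mem_kernel1, mul_smul, hgh, inv_smul_smul, implies_true,
        and_self]
    rw [hker, Subgroup.mem_bot, inv_mul_eq_one] at hmem
    exact hmem.symm⟩
  exact Finite.of_injective _ (toPerm_injective (α := X) (β := V))

theorem smul_mem_neighborSet_sdiff
    (hadj : ∀ (g : X) ⦃a b : V⦄, Γ.Adj a b → Γ.Adj (g • a) (g • b)) {u v w : V} {g : X}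
    (hg : g ∈ stabilizer X u ⊓ stabilizer X v) (hw : w ∈ Γ.neighborSet u \ {v}) :
    g • w ∈ Γ.neighborSet u \ {v} := by
  obtain ⟨hgu, hgv⟩ := hg
  refine ⟨?_, fun h => hw.2 ?_⟩
  · simpa [mem_stabilizer_iff.mp hgu] using hadj g hw.1
  · rw [Set.mem_singleton_iff, ← mem_stabilizer_iff.mp hgv] at h
    exact smul_left_cancel g h

theorem exists_smul_eq_of_twoArcTransitive
    (h2arc : ∀ ⦃v0 v1 v2 w0 w1 w2 : V⦄, Γ.Adj v0 v1 → Γ.Adj v1 v2 → v0 ≠ v2 →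
      Γ.Adj w0 w1 → Γ.Adj w1 w2 → w0 ≠ w2 →
        ∃ g : X, g • v0 = w0 ∧ g • v1 = w1 ∧ g • v2 = w2)
    {u v : V} (huv : Γ.Adj u v) :
    ∀ w ∈ Γ.neighborSet u \ {v}, ∀ w' ∈ Γ.neighborSet u \ {v},
      ∃ g ∈ stabilizer X u ⊓ stabilizer X v, g • w = w' := by
  rintro w ⟨hw, hwv⟩ w' ⟨hw', hw'v⟩
  obtain ⟨g, hgw, hgu, hgv⟩ := h2arc hw.symm huv hwv hw'.symm huv hw'v
  exact ⟨g, ⟨hgu, hgv⟩, hgw⟩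

theorem NormalIn.le_kernel1 {r : ℕ} [Fact r.Prime]
    (hadj : ∀ (g : X) ⦃a b : V⦄, Γ.Adj a b → Γ.Adj (g • a) (g • b))
    (h2arc : ∀ ⦃v0 v1 v2 w0 w1 w2 : V⦄, Γ.Adj v0 v1 → Γ.Adj v1 v2 → v0 ≠ v2 →
      Γ.Adj w0 w1 → Γ.Adj w1 w2 → w0 ≠ w2 →
        ∃ g : X, g • v0 = w0 ∧ g • v1 = w1 ∧ g • v2 = w2)
    {u v : V} (huv : Γ.Adj u v) {N : Subgroup X}
    (hN : NormalIn (stabilizer X u ⊓ stabilizer X v) N) (hNr : IsPGroup r N)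
    (hr : ¬ r ∣ (Γ.neighborSet u \ {v}).ncard) : N ≤ kernel1 Γ X u := by
  obtain ⟨s₀, hs₀, hfix⟩ := hNr.exists_fixed_mem_of_not_dvd_ncard
    (fun n hn _ hs => smul_mem_neighborSet_sdiff hadj (hN.1 hn) hs) hr
  have hfixS := hN.smul_eq_self_of_isPretransitive (exists_smul_eq_of_twoArcTransitive h2arc huv)
    hs₀ hfix
  intro n hn
  refine mem_kernel1.mpr ⟨(hN.1 hn).1, fun w hw => ?_⟩
  by_cases hwv : w = v
  · exact hwv ▸ (hN.1 hn).2
  · exact hfixS n hn w ⟨hw, hwv⟩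

theorem eq_bot_of_normalIn_stabilizer_inf {p d : ℕ} (hp : p.Prime)
    (hd1 : ∃ k : ℕ, d - 1 = p ^ k)
    (hreg : ∀ w : V, (Γ.neighborSet w).ncard = d)
    (hadj : ∀ (g : X) ⦃a b : V⦄, Γ.Adj a b → Γ.Adj (g • a) (g • b))
    (h2arc : ∀ ⦃v0 v1 v2 w0 w1 w2 : V⦄, Γ.Adj v0 v1 → Γ.Adj v1 v2 → v0 ≠ v2 →
      Γ.Adj w0 w1 → Γ.Adj w1 w2 → w0 ≠ w2 →
        ∃ g : X, g • v0 = w0 ∧ g • v1 = w1 ∧ g • v2 = w2)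
    {u v : V} (huv : Γ.Adj u v) (hker : kernel1 Γ X u ⊓ kernel1 Γ X v = ⊥)
    {r : ℕ} (hr : r.Prime) (hrp : r ≠ p) {N : Subgroup X}
    (hN : NormalIn (stabilizer X u ⊓ stabilizer X v) N) (hNr : IsPGroup r N) : N = ⊥ := by
  have := Fact.mk hr
  obtain ⟨k, hk⟩ := hd1
  have hndvd : ∀ x y, Γ.Adj x y → ¬ r ∣ (Γ.neighborSet x \ {y}).ncard := by
    intro x y hxy hdvd
    rw [Set.ncard_sdiff_singleton_of_mem (s := Γ.neighborSet x) hxy, hreg, hk] at hdvd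
    exact hrp ((Nat.prime_dvd_prime_iff_eq hr hp).mp (hr.dvd_of_dvd_pow hdvd))
  have hN' : NormalIn (stabilizer X v ⊓ stabilizer X u) N := inf_comm (stabilizer X u) _ ▸ hN
  rw [eq_bot_iff, ← hker]
  exact le_inf (hN.le_kernel1 hadj h2arc huv hNr (hndvd u v huv))
    (hN'.le_kernel1 hadj h2arc huv.symm hNr (hndvd v u huv.symm))

end Graph

theorem stmt_12_general {V X : Type*} [Fintype V] [Group X] [MulAction X V]
    (Γ : SimpleGraph V) (p : ℕ) (hp : p.Prime) (d : ℕ)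
    (hd1 : ∃ k : ℕ, d - 1 = p ^ k)
    (hreg : ∀ w : V, (Γ.neighborSet w).ncard = d)
    (hadj : ∀ (g : X) ⦃a b : V⦄, Γ.Adj a b → Γ.Adj (g • a) (g • b))
    (h2arc : ∀ ⦃v0 v1 v2 w0 w1 w2 : V⦄, Γ.Adj v0 v1 → Γ.Adj v1 v2 → v0 ≠ v2 →
      Γ.Adj w0 w1 → Γ.Adj w1 w2 → w0 ≠ w2 →
        ∃ g : X, g • v0 = w0 ∧ g • v1 = w1 ∧ g • v2 = w2)
    {u v : V} (huv : Γ.Adj u v)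
    (hker : kernel1 Γ X u ⊓ kernel1 Γ X v = ⊥) :
    -- (1) `X_{uv}` has no nontrivial normal `r`-subgroup for any prime `r ≠ p`
    (∀ r : ℕ, r.Prime → r ≠ p → ∀ N : Subgroup X,
      NormalIn (stabilizer X u ⊓ stabilizer X v) N → IsPGroup r N → N = ⊥) ∧
    -- (2) normal `r`-subgroups of `X_{{u,v}}` have order at most `2` for primes `r ≠ p`
    (∀ r : ℕ, r.Prime → r ≠ p → ∀ N : Subgroup X,
      NormalIn (stabilizer X ({u, v} : Set V)) N → IsPGroup r N → Nat.card N ≤ 2) ∧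
    -- (3) `O_p(X_{uv}) ≤ O_p(X_{{u,v}})` with index at most `2`
    (∀ P Q : Subgroup X,
      IsMaxNormalPIn p (stabilizer X u ⊓ stabilizer X v) P →
      IsMaxNormalPIn p (stabilizer X ({u, v} : Set V)) Q →
        P ≤ Q ∧ P.relIndex Q ≤ 2) ∧
    -- consequently `O_p(X_{{u,v}}) ≤ Fit(X_{{u,v}})` with index at most `2`
    (∀ Q F : Subgroup X,
      IsMaxNormalPIn p (stabilizer X ({u, v} : Set V)) Q →
      IsFittingIn (stabilizer X ({u, v} : Set V)) F →
        Q ≤ F ∧ Q.relIndex F ≤ 2) := by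
  have := finite_of_kernel1_inf_eq_bot hker
  have hpart1 : ∀ r : ℕ, r.Prime → r ≠ p → ∀ N : Subgroup X,
      NormalIn (stabilizer X u ⊓ stabilizer X v) N → IsPGroup r N → N = ⊥ :=
    fun _ hr hrp _ hN hNr =>
      eq_bot_of_normalIn_stabilizer_inf hp hd1 hreg hadj h2arc huv hker hr hrp hN hNr
  have hpart2 : ∀ r : ℕ, r.Prime → r ≠ p → ∀ N : Subgroup X,
      NormalIn (stabilizer X ({u, v} : Set V)) N → IsPGroup r N → Nat.card N ≤ 2 :=
    fun r hr hrp _ hN hNr => card_le_two_of_normalIn_stabilizer_pair (hpart1 r hr hrp) hN hNr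
  exact ⟨hpart1, hpart2, fun _ _ hP hQ => hP.le_and_relIndex_le_two hQ,
    fun _ _ hQ hF => hF.le_and_relIndex_le_two hp hpart2 hQ⟩

/-- Let `p` be a prime and `Γ` a finite connected regular graph of
valency `d ≥ 3` with `d − 1` a power of `p`. Let `X ≤ Aut Γ` with `Γ`
`(X,2)`-arc-transitive, `{u,v}` an edge, and `X_{uv}^{[1]} = 1`. Then: (1) for every
prime `r ≠ p`, `X_{uv}` has no nontrivial normal `r`-subgroup (so `Fit(X_{uv}) =
O_p(X_{uv})`); (2) for every prime `r ≠ p`, every normal `r`-subgroup of `X_{{u,v}}`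
has order at most `2`; (3) `O_p(X_{uv}) ≤ O_p(X_{{u,v}})` with index at most `2`;
consequently `Fit(X_{{u,v}})` contains `O_p(X_{{u,v}})` with index at most `2`. -/
theorem stmt_12 {V X : Type*} [Fintype V] [Group X] [MulAction X V]
    (Γ : SimpleGraph V) (p : ℕ) (hp : p.Prime) (d : ℕ) (hd : 3 ≤ d)
    (hd1 : ∃ k : ℕ, d - 1 = p ^ k)
    (hreg : ∀ w : V, (Γ.neighborSet w).ncard = d)
    (hconn : Γ.Connected)
    (hadj : ∀ (g : X) ⦃a b : V⦄, Γ.Adj a b → Γ.Adj (g • a) (g • b))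
    (hfaith : ∀ g : X, (∀ x : V, g • x = x) → g = 1)
    (h2arc : ∀ ⦃v0 v1 v2 w0 w1 w2 : V⦄, Γ.Adj v0 v1 → Γ.Adj v1 v2 → v0 ≠ v2 →
      Γ.Adj w0 w1 → Γ.Adj w1 w2 → w0 ≠ w2 →
        ∃ g : X, g • v0 = w0 ∧ g • v1 = w1 ∧ g • v2 = w2)
    {u v : V} (huv : Γ.Adj u v)
    (hker : kernel1 Γ X u ⊓ kernel1 Γ X v = ⊥) :
    -- (1) `X_{uv}` has no nontrivial normal `r`-subgroup for any prime `r ≠ p`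
    (∀ r : ℕ, r.Prime → r ≠ p → ∀ N : Subgroup X,
      NormalIn (stabilizer X u ⊓ stabilizer X v) N → IsPGroup r N → N = ⊥) ∧
    -- (2) normal `r`-subgroups of `X_{{u,v}}` have order at most `2` for primes `r ≠ p`
    (∀ r : ℕ, r.Prime → r ≠ p → ∀ N : Subgroup X,
      NormalIn (stabilizer X ({u, v} : Set V)) N → IsPGroup r N → Nat.card N ≤ 2) ∧
    -- (3) `O_p(X_{uv}) ≤ O_p(X_{{u,v}})` with index at most `2`
    (∀ P Q : Subgroup X,
      IsMaxNormalPIn p (stabilizer X u ⊓ stabilizer X v) P →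
      IsMaxNormalPIn p (stabilizer X ({u, v} : Set V)) Q →
        P ≤ Q ∧ P.relIndex Q ≤ 2) ∧
    -- consequently `O_p(X_{{u,v}}) ≤ Fit(X_{{u,v}})` with index at most `2`
    (∀ Q F : Subgroup X,
      IsMaxNormalPIn p (stabilizer X ({u, v} : Set V)) Q →
      IsFittingIn (stabilizer X ({u, v} : Set V)) F →
        Q ≤ F ∧ Q.relIndex F ≤ 2) :=
  stmt_12_general Γ p hp d hd1 hreg hadj h2arc huv hker

end Stmt12
end
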